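/- Let p ∈ ℂ*, m ∈ {0,1,2}, ζ = e^{2πi/3}. Let E be the 'Case 3' array: E(1,2,3)=1, E(1,3,2)=p, E(2,1,3)=(1/conj(p))·ζ^{-m}, E(2,3,1)=ζ^m, E(3,1,2)=|p|²·ζ^{-m}, E(3,2,1)=p·ζ^m. Let Ẽ be the array of SU_{p',m}(3) with p' = conj(p)·ζ^{-m}: Ẽ(1,2,3)=1, Ẽ(1,3,2)=p', Ẽ(2,1,3)=p'·ζ^{-m}, Ẽ(2,3,1)=|p'|²·ζ^m, Ẽ(3,1,2)=|p'|²·ζ^{-m}, Ẽ(3,2,1)=|p'|²·p'·ζ^m. Then there exist a permutation σ ∈ S₃ and a constant c ∈ ℂ* such that E(σ(i₁),σ(i₂),σ(i₃)) = c·Ẽ(i₁,i₂,i₃) for all (i₁,i₂,i₃) ∈ S₃. -/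

import Mathlib

noncomputable def zeta3 : ℂ := Complex.exp (2 * Real.pi * Complex.I / 3)

/-- The 'Case 3' array of Lemma 8.1 (indices `0,1,2` stand for `1,2,3`). -/
noncomputable def Case3Arr (p : ℂ) (m : ℕ) : Fin 3 → Fin 3 → Fin 3 → ℂ := fun a b c =>
  if (a, b, c) = ((0 : Fin 3), (1 : Fin 3), (2 : Fin 3)) then 1
  else if (a, b, c) = ((0 : Fin 3), (2 : Fin 3), (1 : Fin 3)) then p
  else if (a, b, c) = ((1 : Fin 3), (0 : Fin 3), (2 : Fin 3)) then
    (1 / (starRingEnd ℂ) p) * zeta3 ^ (-(m : ℤ))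
  else if (a, b, c) = ((1 : Fin 3), (2 : Fin 3), (0 : Fin 3)) then zeta3 ^ (m : ℤ)
  else if (a, b, c) = ((2 : Fin 3), (0 : Fin 3), (1 : Fin 3)) then
    (‖p‖ : ℂ) ^ 2 * zeta3 ^ (-(m : ℤ))
  else if (a, b, c) = ((2 : Fin 3), (1 : Fin 3), (0 : Fin 3)) then p * zeta3 ^ (m : ℤ)
  else 0

/-- The array defining `SU_{q,m}(3)`. -/
noncomputable def SuArr (q : ℂ) (m : ℕ) : Fin 3 → Fin 3 → Fin 3 → ℂ := fun a b c =>
  if (a, b, c) = ((0 : Fin 3), (1 : Fin 3), (2 : Fin 3)) then 1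
  else if (a, b, c) = ((0 : Fin 3), (2 : Fin 3), (1 : Fin 3)) then q
  else if (a, b, c) = ((1 : Fin 3), (0 : Fin 3), (2 : Fin 3)) then q * zeta3 ^ (-(m : ℤ))
  else if (a, b, c) = ((1 : Fin 3), (2 : Fin 3), (0 : Fin 3)) then
    (‖q‖ : ℂ) ^ 2 * zeta3 ^ (m : ℤ)
  else if (a, b, c) = ((2 : Fin 3), (0 : Fin 3), (1 : Fin 3)) then
    (‖q‖ : ℂ) ^ 2 * zeta3 ^ (-(m : ℤ))
  else if (a, b, c) = ((2 : Fin 3), (1 : Fin 3), (0 : Fin 3)) then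
    (‖q‖ : ℂ) ^ 2 * q * zeta3 ^ (m : ℤ)
  else 0

/-! Swapping the first two indices of `E` turns it into `E(2,1,3) = ζ^{-m} / conj p` times `Ẽ`:
entry by entry this only uses `|p'| = |p|`, `|p|² = p · conj p` and `ζ^{3m} = 1`. -/

open ComplexConjugate

lemma isPrimitiveRoot_zeta3 : IsPrimitiveRoot zeta3 3 := by
  simpa [zeta3] using Complex.isPrimitiveRoot_exp 3 (by norm_num)

lemma zeta3_ne_zero : zeta3 ≠ 0 :=
  isPrimitiveRoot_zeta3.ne_zero (by norm_num)

lemma zeta3_pow_pow_three (m : ℕ) : (zeta3 ^ m) ^ 3 = 1 := by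
  rw [← pow_mul, mul_comm, pow_mul, isPrimitiveRoot_zeta3.pow_eq_one, one_pow]

lemma norm_conj_mul_zeta3_zpow (p : ℂ) (k : ℤ) : ‖conj p * zeta3 ^ k‖ = ‖p‖ := by
  rw [norm_mul, norm_zpow, isPrimitiveRoot_zeta3.norm'_eq_one (by norm_num), one_zpow, mul_one,
    Complex.norm_conj]

lemma case3Arr_swap_eq_mul_suArr (p : ℂ) (hp : p ≠ 0) (m : ℕ) (i₁ i₂ i₃ : Fin 3) :
    Case3Arr p m (Equiv.swap 0 1 i₁) (Equiv.swap 0 1 i₂) (Equiv.swap 0 1 i₃) =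
      zeta3 ^ (-(m : ℤ)) / conj p * SuArr (conj p * zeta3 ^ (-(m : ℤ))) m i₁ i₂ i₃ := by
  have hu3 := zeta3_pow_pow_three m
  have hu0 : zeta3 ^ m ≠ 0 := pow_ne_zero _ zeta3_ne_zero
  have hpc : conj p ≠ 0 := (map_ne_zero _).mpr hp
  simp only [Case3Arr, SuArr, norm_conj_mul_zeta3_zpow]
  simp only [← Complex.mul_conj', zpow_neg, zpow_natCast]
  generalize zeta3 ^ m = u at hu3 hu0
  fin_cases i₁ <;> fin_cases i₂ <;> fin_cases i₃ <;> simp [Equiv.swap_apply_def] <;> field_simp <;>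
    exact hu3

theorem stmt15_general (p : ℂ) (hp : p ≠ 0) (m : ℕ) :
    ∃ (σ : Equiv.Perm (Fin 3)) (c : ℂ), c ≠ 0 ∧
      ∀ i₁ i₂ i₃ : Fin 3, i₁ ≠ i₂ → i₂ ≠ i₃ → i₁ ≠ i₃ →
        Case3Arr p m (σ i₁) (σ i₂) (σ i₃) =
          c * SuArr ((starRingEnd ℂ) p * zeta3 ^ (-(m : ℤ))) m i₁ i₂ i₃ := by
  refine ⟨Equiv.swap 0 1, zeta3 ^ (-(m : ℤ)) / conj p, ?_,
    fun i₁ i₂ i₃ _ _ _ => case3Arr_swap_eq_mul_suArr p hp m i₁ i₂ i₃⟩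
  exact div_ne_zero (zpow_ne_zero _ zeta3_ne_zero) ((map_ne_zero _).mpr hp)

theorem stmt15 (p : ℂ) (hp : p ≠ 0) (m : ℕ) (hm : m < 3) :
    ∃ (σ : Equiv.Perm (Fin 3)) (c : ℂ), c ≠ 0 ∧
      ∀ i₁ i₂ i₃ : Fin 3, i₁ ≠ i₂ → i₂ ≠ i₃ → i₁ ≠ i₃ →
        Case3Arr p m (σ i₁) (σ i₂) (σ i₃) =
          c * SuArr ((starRingEnd ℂ) p * zeta3 ^ (-(m : ℤ))) m i₁ i₂ i₃ :=
  stmt15_general p hp m
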